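/- arXiv:2502.02157 — 5 statements merged into one kernel-verified Lean document; each statement's English description precedes it below -/
import Mathlib

section
/- For every n ≥ 2 and every 1 ≤ i < n, the projection of the chain word C_n to the variables {x_i, x_{i+1}} (deleting all other letters) equals x_i x_{i+1} x_i x_{i+1}, and for every 1 ≤ i < j ≤ n with j − i ≥ 2, the projection of C_n to {x_i, x_j} equals x_i² x_j². -/
/-!
Write `C (k+1) = P k · x_{k+1}`, where `P 0 = x₁` and `P (k+1) = P k · x_{k+2} x_{k+1}`. The prefix `P k`
uses only the letters `x₁, …, x_{k+1}`: each `xₐ` with `a ≤ k` twice and `x_{k+1}` once. Hence for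
`i < j ≤ n` the projection of `C n` to `{xᵢ, xⱼ}` only sees `P (j-1) · xⱼ = P (j-2) · xⱼ x_{j-1} xⱼ`, and
since `P (j-2)` contains no `xⱼ`, its contribution is `xᵢ` if `i = j - 1` and `xᵢ²` otherwise.
-/

/-- The chain words: `C 0 = 1`, `C 1 = x₁²`, and if `C k = c · xₖ` then
`C (k+1) = c · x_{k+1} · xₖ · x_{k+1}`. Variables are the positive naturals. -/
def chainW : ℕ → List ℕ
  | 0 => []
  | 1 => [1, 1]
  | (k+2) => (chainW (k+1)).dropLast ++ [k+2, k+1, k+2]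

/-- Projection of a word to the two variables `i`, `j` (deleting all other letters). -/
def proj2 (u : List ℕ) (i j : ℕ) : List ℕ := u.filter (fun a => a == i || a == j)

def chainPrefix : ℕ → List ℕ
  | 0 => [1]
  | k + 1 => chainPrefix k ++ [k + 2, k + 1]

theorem chainW_succ (k : ℕ) : chainW (k + 1) = chainPrefix k ++ [k + 1] := by
  induction k with
  | zero => rfl
  | succ k ih => simp [chainW, ih, chainPrefix]

theorem le_of_mem_chainPrefix {a k : ℕ} (h : a ∈ chainPrefix k) : a ≤ k + 1 := by
  induction k with
  | zero => simp_all [chainPrefix]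
  | succ k ih =>
    simp only [chainPrefix, List.mem_append, List.mem_cons, List.not_mem_nil, or_false] at h
    rcases h with h | rfl | rfl
    · exact (ih h).trans (Nat.le_succ _)
    all_goals omega

theorem count_chainPrefix_self (k : ℕ) : (chainPrefix k).count (k + 1) = 1 := by
  cases k with
  | zero => rfl
  | succ k =>
    rw [chainPrefix, List.count_append, List.count_eq_zero.2 fun h => by
      have := le_of_mem_chainPrefix h; omega]
    simp

theorem count_chainPrefix_of_le {a k : ℕ} (ha : 1 ≤ a) (hak : a ≤ k) :
    (chainPrefix k).count a = 2 := by
  induction k with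
  | zero => omega
  | succ k ih =>
    rw [chainPrefix, List.count_append]
    rcases hak.lt_or_eq with hak | rfl
    · rw [ih (by omega), List.count_eq_zero.2 (by grind)]
    · rw [count_chainPrefix_self]
      simp

theorem proj2_append (u v : List ℕ) (i j : ℕ) :
    proj2 (u ++ v) i j = proj2 u i j ++ proj2 v i j :=
  List.filter_append ..

theorem proj2_eq_replicate_of_not_mem {u : List ℕ} {j : ℕ} (hj : j ∉ u) (i : ℕ) :
    proj2 u i j = List.replicate (u.count i) i := by
  rw [proj2, ← List.filter_beq]
  refine List.filter_congr fun a ha => ?_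
  have : a ≠ j := fun h => hj (h ▸ ha)
  simp [this]

theorem proj2_chainPrefix_of_le {i j k : ℕ} (hij : i < j) (hjk : j ≤ k) :
    proj2 (chainPrefix k) i j = proj2 (chainPrefix j) i j := by
  induction k, hjk using Nat.le_induction with
  | base => rfl
  | succ k hjk ih =>
    rw [chainPrefix, proj2_append, ih]
    grind [proj2]

theorem proj2_chainW {i j n : ℕ} (hij : i ≤ j) (hjn : j < n) :
    proj2 (chainW n) i (j + 1) = proj2 (chainPrefix j) i (j + 1) ++ [j + 1] := by
  obtain ⟨m, rfl⟩ : ∃ m, n = m + 1 := ⟨n - 1, by omega⟩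
  rw [chainW_succ, proj2_append]
  rcases (Nat.lt_succ_iff.1 hjn).lt_or_eq with hjm | rfl
  · rw [proj2_chainPrefix_of_le (by omega) hjm, chainPrefix, proj2_append]
    grind [proj2]
  · simp [proj2]

theorem chain_projections_general (n : ℕ) :
    (∀ i : ℕ, 1 ≤ i → i < n → proj2 (chainW n) i (i+1) = [i, i+1, i, i+1]) ∧
    (∀ i j : ℕ, 1 ≤ i → i < j → j ≤ n → 2 ≤ j - i →
      proj2 (chainW n) i j = [i, i, j, j]) := by
  refine ⟨fun i hi hin => ?_, fun i j hi hij hjn hji => ?_⟩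
  · obtain ⟨l, rfl⟩ : ∃ l, i = l + 1 := ⟨i - 1, by omega⟩
    have hl : l + 2 ∉ chainPrefix l := fun h => by have := le_of_mem_chainPrefix h; omega
    rw [proj2_chainW le_rfl hin, chainPrefix, proj2_append, proj2_eq_replicate_of_not_mem hl,
      count_chainPrefix_self]
    simp [proj2]
  · obtain ⟨m, rfl⟩ : ∃ m, j = m + 1 + 1 := ⟨j - 2, by omega⟩
    have hm : m + 2 ∉ chainPrefix m := fun h => by have := le_of_mem_chainPrefix h; omega
    rw [proj2_chainW (by omega) hjn, chainPrefix, proj2_append, proj2_eq_replicate_of_not_mem hm,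
      count_chainPrefix_of_le hi (by omega)]
    grind [proj2]

/-- For `n ≥ 2`: the projection of the chain word `C n` to `{xᵢ, x_{i+1}}` is
`xᵢ x_{i+1} xᵢ x_{i+1}` for `1 ≤ i < n`, and its projection to `{xᵢ, xⱼ}` is
`xᵢ² xⱼ²` for `1 ≤ i < j ≤ n` with `j - i ≥ 2`. -/
theorem chain_projections (n : ℕ) (hn : 2 ≤ n) :
    (∀ i : ℕ, 1 ≤ i → i < n → proj2 (chainW n) i (i+1) = [i, i+1, i, i+1]) ∧
    (∀ i j : ℕ, 1 ≤ i → i < j → j ≤ n → 2 ≤ j - i →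
      proj2 (chainW n) i j = [i, i, j, j]) :=
  chain_projections_general n
end

section
/- For every n ≥ 1 and every 1 ≤ m ≤ n, deleting the variable x_m from the chain word C_n yields the concatenation C(x_1,...,x_{m−1}) · C(x_{m+1},...,x_n), where C(y_1,...,y_k) denotes the chain word C_k with variables renamed to y_1,...,y_k in order. -/
def chainPairs (N : ℕ) : List ℕ := (List.range N).flatMap fun i => [i + 1, i]

lemma chainPairs_succ (N : ℕ) : chainPairs (N + 1) = chainPairs N ++ [N + 1, N] := by
  simp [chainPairs, List.range_succ]

lemma chainPairs_add (a b : ℕ) :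
    chainPairs (a + b) = chainPairs a ++ (chainPairs b).map (· + a) := by
  simp only [chainPairs, List.range_add, List.flatMap_append, List.flatMap_map,
    List.map_flatMap, List.map_cons, List.map_nil]
  congr 2
  funext i
  simp only [List.cons.injEq, and_true]
  omega

lemma le_of_mem_chainPairs {N a : ℕ} (h : a ∈ chainPairs N) : a ≤ N := by
  simp only [chainPairs, List.mem_flatMap, List.mem_range, List.mem_cons,
    List.not_mem_nil, or_false] at h
  omega

lemma chainW_eq_filter_chainPairs (n : ℕ) :
    chainW n = (chainPairs (n + 1)).filter fun a => 1 ≤ a ∧ a ≤ n := by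
  fun_induction chainW n with
  | case1 => rfl
  | case2 => rfl
  | case3 k ih =>
    have hlow : ((chainPairs (k + 1)).filter fun a => 1 ≤ a ∧ a ≤ k + 1) =
        (chainPairs (k + 1)).filter fun a => 1 ≤ a ∧ a ≤ k + 2 :=
      List.filter_congr fun a ha => by
        have := le_of_mem_chainPairs ha
        grind
    rw [ih, chainPairs_succ (k + 2), chainPairs_succ (k + 1)]
    simpa [List.filter_append] using hlow

lemma chainW_pred_eq_filter_chainPairs (m : ℕ) :
    chainW (m - 1) = (chainPairs m).filter fun a => 1 ≤ a ∧ a < m := by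
  cases m with
  | zero => rfl
  | succ k =>
    rw [Nat.add_sub_cancel, chainW_eq_filter_chainPairs]
    simp only [Nat.lt_succ_iff]

theorem chain_delete_general (n m : ℕ) (h2 : m ≤ n) :
    (chainW n).filter (fun a => a != m) =
      chainW (m - 1) ++ (chainW (n - m)).map (fun a => a + m) := by
  have hsplit : chainPairs (n + 1) = chainPairs m ++ (chainPairs (n - m + 1)).map (· + m) := by
    rw [← chainPairs_add]
    congr 1
    omega
  rw [chainW_eq_filter_chainPairs n, hsplit, List.filter_filter, List.filter_append,
    List.filter_map, chainW_pred_eq_filter_chainPairs, chainW_eq_filter_chainPairs (n - m)]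
  congr 1
  · refine List.filter_congr fun a ha => ?_
    have := le_of_mem_chainPairs ha
    grind
  · congr 1
    refine List.filter_congr fun a _ => ?_
    grind

/-- For every `n ≥ 1` and `1 ≤ m ≤ n`, deleting the variable `xₘ` from `C n` yields
`C(x₁,…,x_{m-1}) · C(x_{m+1},…,xₙ)`, where the second factor is the chain word
`C (n-m)` with its variables renamed (shifted) to `x_{m+1},…,xₙ`. -/
theorem chain_delete (n m : ℕ) (hn : 1 ≤ n) (h1 : 1 ≤ m) (h2 : m ≤ n) :
    (chainW n).filter (fun a => a != m) =
      chainW (m - 1) ++ (chainW (n - m)).map (fun a => a + m) :=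
  chain_delete_general n m h2
end

section
/- Suppose S is a semigroup such that every identity u ≈ v satisfied by S has property P_{(p ≤ c, q ≤ d)}. Then for each 0 ≤ u₀ ≤ p−1 and 0 ≤ v₀ ≤ c−p, every identity satisfied by S also has property P_{(p−u₀ ≤ c−u₀−v₀, q ≤ d)}. -/
/-- Product of the values of a word in a semigroup, as an `Option` (`none` for the
empty word). -/
def oprod {S : Type*} [Mul S] (f : ℕ → S) (u : List ℕ) : Option S :=
  u.foldl (fun o a => match o with
    | none => some (f a)
    | some s => some (s * f a)) none

/-- A semigroup `S` satisfies the identity `u ≈ v` (both words nonempty) if every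
substitution of elements of `S` for the variables gives equal values. -/
def SatS (S : Type*) [Semigroup S] (u v : List ℕ) : Prop :=
  ∀ f : ℕ → S, oprod f u = oprod f v

/-- The position (index) in `u` of the `i`-th (1-indexed) occurrence of the
variable `x`; equals `u.length` if there is no such occurrence. -/
def nthOccPos (u : List ℕ) (x i : ℕ) : ℕ :=
  ((List.range u.length).filter (fun k => u[k]? == some x)).getD (i - 1) u.length

/-- `(ᵢx) <_u (ⱼy)` : the `i`-th occurrence of `x` precedes the `j`-th occurrence
of `y` in the word `u`. -/
def Precedes (u : List ℕ) (x i y j : ℕ) : Prop := nthOccPos u x i < nthOccPos u y j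

/-- An identity `u ≈ v` satisfies property `P_{(p ≤ c, q ≤ d)}` if for all variables
`x`, `y` occurring `c` resp. `d` times in both sides, `(ₚx) <_u (_q y)` iff
`(ₚx) <_v (_q y)`. -/
def PropP (p c q d : ℕ) (u v : List ℕ) : Prop :=
  ∀ x y : ℕ, u.count x = c → v.count x = c → u.count y = d → v.count y = d →
    (Precedes u x p y q ↔ Precedes v x p y q)

/-!
Padding both sides of an identity `u ≈ v` of `S` as `x^{u₀} u x^{v₀} ≈ x^{u₀} v x^{v₀}` gives
another identity of `S`, in which `x` occurs `c` times when it occurred `c - u₀ - v₀` times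
before. The `p`-th occurrence of `x` in a padded word is the `(p - u₀)`-th occurrence of `x` in
the original word shifted by `u₀`, and the occurrences of `y ≠ x` are shifted by the same amount,
so `P_{(p ≤ c, q ≤ d)}` for the padded identity is `P_{(p - u₀ ≤ c - u₀ - v₀, q ≤ d)}` for the
original one. For `x = y` the relative order of two occurrences of `x` depends only on the
number of occurrences of `x`, which is the same on both sides.
-/

namespace List

lemma getD_le_of_forall_lt {L : List ℕ} {n : ℕ} (hn : ∀ k ∈ L, k < n) (j : ℕ) :
    L.getD j n ≤ n := by
  by_cases hj : j < L.length
  · exact (getD_eq_getElem _ _ hj ▸ hn _ (getElem_mem hj)).le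
  · exact (getD_eq_default _ _ (not_lt.mp hj)).le

lemma getD_lt_getD_iff {L : List ℕ} {n : ℕ} (hL : L.SortedLT) (hn : ∀ k ∈ L, k < n)
    (i j : ℕ) : L.getD i n < L.getD j n ↔ i < L.length ∧ i < j := by
  by_cases hi : i < L.length
  · rw [getD_eq_getElem _ _ hi]
    by_cases hj : j < L.length
    · rw [getD_eq_getElem _ _ hj, hL.getElem_lt_getElem_iff]
      simp [hi]
    · rw [getD_eq_default _ _ (not_lt.mp hj)]
      exact iff_of_true (hn _ (getElem_mem hi)) ⟨hi, by omega⟩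
  · rw [getD_eq_default _ _ (not_lt.mp hi)]
    exact iff_of_false (getD_le_of_forall_lt hn j).not_gt (fun h => hi h.1)

lemma lt_getD_iff_of_lt_of_le {L : List ℕ} {X n m : ℕ} (hX : X < n) (hnm : n ≤ m) (i : ℕ) :
    X < L.getD i m ↔ X < L.getD i n := by
  by_cases hi : i < L.length
  · simp only [getD_eq_getElem _ _ hi]
  · simp only [getD_eq_default _ _ (not_lt.mp hi)]
    omega

end List

section Occurrences

lemma nthOccPos_eq_getD_idxsOf (u : List ℕ) (x i : ℕ) :
    nthOccPos u x i = (u.idxsOf x).getD (i - 1) u.length := by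
  rw [nthOccPos]
  congr 1
  refine List.Pairwise.eq_of_mem_iff (List.pairwise_lt_range.filter _) List.pairwise_idxsOf
    fun k => ?_
  simp only [List.mem_filter, List.mem_range, beq_iff_eq, List.getElem?_eq_some_iff,
    List.mem_idxsOf_iff_exists_getElem_pos]
  exact ⟨fun ⟨_, h⟩ => h, fun h => ⟨h.1, h⟩⟩

lemma nthOccPos_lt_length {u : List ℕ} {x i : ℕ} (h : i - 1 < u.count x) :
    nthOccPos u x i < u.length := by
  rw [nthOccPos_eq_getD_idxsOf, List.getD_eq_getElem _ _ (by simpa)]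
  exact List.lt_add_of_mem_idxsOf _ (List.getElem_mem _)

lemma precedes_self_iff (u : List ℕ) (x i j : ℕ) :
    Precedes u x i x j ↔ i - 1 < u.count x ∧ i - 1 < j - 1 := by
  rw [Precedes, nthOccPos_eq_getD_idxsOf, nthOccPos_eq_getD_idxsOf,
    List.getD_lt_getD_iff (List.sortedLT_iff_pairwise.mpr List.pairwise_idxsOf)
      (fun k hk => by simpa using List.lt_add_of_mem_idxsOf k hk), List.length_idxsOf]

lemma nthOccPos_append_of_count_le {w : List ℕ} {x i : ℕ} (h : w.count x ≤ i - 1)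
    (u : List ℕ) : nthOccPos (w ++ u) x i = w.length + nthOccPos u x (i - w.count x) := by
  simp only [nthOccPos_eq_getD_idxsOf, List.idxsOf_append, List.length_append]
  rw [List.getD_append_right _ _ _ _ (by simpa), List.idxsOf_start, List.length_idxsOf, zero_add,
    add_comm w.length u.length, Nat.sub_right_comm, add_comm w.length]
  exact List.getD_map _ _ _

lemma nthOccPos_append_of_lt_count {u : List ℕ} {x i : ℕ} (h : i - 1 < u.count x)
    (w : List ℕ) : nthOccPos (u ++ w) x i = nthOccPos u x i := by
  simp only [nthOccPos_eq_getD_idxsOf, List.idxsOf_append]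
  rw [List.getD_append _ _ _ _ (by simpa), List.getD_eq_getElem _ _ (by simpa),
    List.getD_eq_getElem _ _ (by simpa)]

lemma nthOccPos_append_of_not_mem {w : List ℕ} {y : ℕ} (h : y ∉ w) (u : List ℕ) (j : ℕ) :
    nthOccPos (u ++ w) y j = (u.idxsOf y).getD (j - 1) (u.length + w.length) := by
  rw [nthOccPos_eq_getD_idxsOf, List.idxsOf_append, List.length_append,
    (List.idxsOf_eq_nil_iff (xs := w)).mpr (by simpa using fun z hz (hzy : z = y) => h (hzy ▸ hz)),
    List.append_nil]

lemma precedes_append_left_iff {w : List ℕ} {x i y j : ℕ} (hx : w.count x ≤ i - 1)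
    (hy : w.count y ≤ j - 1) (u : List ℕ) :
    Precedes (w ++ u) x i y j ↔ Precedes u x (i - w.count x) y (j - w.count y) := by
  rw [Precedes, Precedes, nthOccPos_append_of_count_le hx, nthOccPos_append_of_count_le hy,
    add_lt_add_iff_left]

lemma precedes_append_right_iff {u w : List ℕ} {x i y : ℕ} (hx : i - 1 < u.count x) (hy : y ∉ w)
    (j : ℕ) : Precedes (u ++ w) x i y j ↔ Precedes u x i y j := by
  rw [Precedes, Precedes, nthOccPos_append_of_lt_count hx, nthOccPos_append_of_not_mem hy,
    nthOccPos_eq_getD_idxsOf u y]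
  exact List.lt_getD_iff_of_lt_of_le (nthOccPos_lt_length hx) (Nat.le_add_right _ _) _

lemma precedes_replicate_append_append_iff {x y a p : ℕ} (hxy : x ≠ y) (ha : a < p)
    {u : List ℕ} (hu : p - a ≤ u.count x) (b q : ℕ) :
    Precedes (List.replicate a x ++ u ++ List.replicate b x) x p y q ↔
      Precedes u x (p - a) y q := by
  have hx : (List.replicate a x).count x = a := List.count_replicate_self
  have hy : (List.replicate a x).count y = 0 := by simp [List.count_replicate, hxy]
  rw [List.append_assoc, precedes_append_left_iff (by omega) (by omega), hx, hy, Nat.sub_zero,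
    precedes_append_right_iff (by omega) (by simp [hxy.symm])]

end Occurrences

section Identities

variable {S : Type*} [Semigroup S]

/-- `WithOne S` is `Option S` with `none` as unit, so `oprod` is a product in that monoid. -/
lemma oprod_eq_prod (f : ℕ → S) (u : List ℕ) :
    (oprod f u : WithOne S) = (u.map fun a => (f a : WithOne S)).prod := by
  induction u using List.reverseRecOn with
  | nil => rfl
  | append_singleton u a ih =>
    rw [List.map_append, List.prod_append, ← ih, oprod, List.foldl_append, ← oprod]
    cases oprod f u <;> rfl

lemma satS_iff_prod_eq {u v : List ℕ} : SatS S u v ↔ ∀ f : ℕ → S,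
    (u.map fun a => (f a : WithOne S)).prod = (v.map fun a => (f a : WithOne S)).prod := by
  simp only [← oprod_eq_prod]
  rfl

lemma SatS.append_append {u v : List ℕ} (h : SatS S u v) (w w' : List ℕ) :
    SatS S (w ++ u ++ w') (w ++ v ++ w') := by
  rw [satS_iff_prod_eq] at h ⊢
  intro f
  simp only [List.map_append, List.prod_append, h f]

end Identities

theorem propP_shift_general {S : Type*} [Semigroup S] (p c q d : ℕ)
    (hp : 1 ≤ p) (hpc : p ≤ c)
    (H : ∀ u v : List ℕ, u ≠ [] → v ≠ [] → SatS S u v → PropP p c q d u v) :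
    ∀ u₀ v₀ : ℕ, u₀ ≤ p - 1 → v₀ ≤ c - p →
      ∀ u v : List ℕ, u ≠ [] → v ≠ [] → SatS S u v →
        PropP (p - u₀) (c - u₀ - v₀) q d u v := by
  intro u₀ v₀ hu₀ hv₀ u v hu hv huv x y hxu hxv hyu hyv
  rcases eq_or_ne x y with rfl | hxy
  · rw [precedes_self_iff, precedes_self_iff, hxu, hxv]
  let pad (w : List ℕ) := List.replicate u₀ x ++ w ++ List.replicate v₀ x
  have hpad_x {w : List ℕ} (hw : w.count x = c - u₀ - v₀) :
      (pad w).count x = c ∧ (Precedes (pad w) x p y q ↔ Precedes w x (p - u₀) y q) :=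
    ⟨by simp [pad, hw]; omega, precedes_replicate_append_append_iff hxy (by omega) (by omega) _ _⟩
  have hpad_y (w : List ℕ) : (pad w).count y = w.count y := by
    simp [pad, List.count_replicate, hxy]
  rw [← (hpad_x hxu).2, ← (hpad_x hxv).2]
  exact H (pad u) (pad v) (by simp [pad, hu]) (by simp [pad, hv]) (huv.append_append _ _) x y
    (hpad_x hxu).1 (hpad_x hxv).1 (hpad_y u ▸ hyu) (hpad_y v ▸ hyv)

/-- Observation 6.3: if every identity (of nonempty words) satisfied by a semigroup
`S` has property `P_{(p ≤ c, q ≤ d)}`, then for all `0 ≤ u₀ ≤ p-1` and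
`0 ≤ v₀ ≤ c-p`, every identity of `S` has property `P_{(p-u₀ ≤ c-u₀-v₀, q ≤ d)}`. -/
theorem propP_shift {S : Type*} [Semigroup S] (p c q d : ℕ)
    (hp : 1 ≤ p) (hpc : p ≤ c) (hq : 1 ≤ q) (hqd : q ≤ d)
    (H : ∀ u v : List ℕ, u ≠ [] → v ≠ [] → SatS S u v → PropP p c q d u v) :
    ∀ u₀ v₀ : ℕ, u₀ ≤ p - 1 → v₀ ≤ c - p →
      ∀ u v : List ℕ, u ≠ [] → v ≠ [] → SatS S u v →
        PropP (p - u₀) (c - u₀ - v₀) q d u v :=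
  propP_shift_general p c q d hp hpc H
end

section
/- A monoid M satisfies only m-balanced identities if and only if x^m is an isoterm for M, where an identity u ≈ v is m-balanced if con(u) = con(v) and for each variable x, occ(x,u) = occ(x,v) whenever occ(x,u) ≤ m or occ(x,v) ≤ m. -/
/-!
Substituting `a` for a letter `x` and `1` for every other letter turns `M ⊨ u ≈ v` into the
one-letter identity `a ^ occ(x,u) = a ^ occ(x,v)`. If `x^m` is an isoterm, a one-letter identity
`x^p ≈ x^q` with `q ≤ m` forces `p = q`, since `x^m = x^(m-q) x^q ≈ x^(m-q+p)`.
-/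

/-- A monoid `M` satisfies the identity `u ≈ v` if every substitution of elements of
`M` for the variables (letters, which are naturals) makes the two sides equal. -/
def SatM (M : Type*) [Monoid M] (u v : List ℕ) : Prop :=
  ∀ f : ℕ → M, (u.map f).prod = (v.map f).prod

/-- A word `w` is an isoterm for the monoid `M` if the only word `v` with
`M ⊨ w ≈ v` is `w` itself. -/
def Isoterm (M : Type*) [Monoid M] (w : List ℕ) : Prop :=
  ∀ v : List ℕ, SatM M w v → v = w

/-- An identity `u ≈ v` is `m`-balanced if `u` and `v` have the same content and
every variable occurring at most `m` times in one of the sides occurs the same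
number of times in both. -/
def IdBalanced (m : ℕ) (u v : List ℕ) : Prop :=
  (∀ x : ℕ, x ∈ u ↔ x ∈ v) ∧
  ∀ x : ℕ, (u.count x ≤ m ∨ v.count x ≤ m) → u.count x = v.count x

theorem SatM.pow_count_eq {M : Type*} [Monoid M] {u v : List ℕ} (h : SatM M u v)
    (x : ℕ) (a : M) : a ^ u.count x = a ^ v.count x := by
  have key : ∀ w : List ℕ, (w.map fun y => if y = x then a else 1).prod = a ^ w.count x :=
    fun w => (List.prod_map_eq_pow_single x _ fun y hy _ => if_neg hy).trans (by rw [if_pos rfl])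
  rw [← key, ← key]
  exact h _

theorem Isoterm.eq_of_forall_pow_eq {M : Type*} [Monoid M] {m p q : ℕ}
    (iso : Isoterm M (List.replicate m 0)) (hpq : ∀ a : M, a ^ p = a ^ q) (hq : q ≤ m) :
    p = q := by
  have hsat : SatM M (List.replicate m 0) (List.replicate (m - q + p) 0) := by
    intro f
    simp only [List.map_replicate, List.prod_replicate]
    rw [pow_add, hpq, ← pow_add, Nat.sub_add_cancel hq]
  have hlen := congrArg List.length (iso _ hsat)
  simp only [List.length_replicate] at hlen
  omega

theorem IdBalanced.of_count_eq {m : ℕ} {u v : List ℕ}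
    (h : ∀ x : ℕ, (u.count x ≤ m ∨ v.count x ≤ m) → u.count x = v.count x) :
    IdBalanced m u v := by
  refine ⟨fun x => ?_, h⟩
  by_cases hu : u.count x ≤ m
  · rw [← List.count_pos_iff, ← List.count_pos_iff, h x (Or.inl hu)]
  · have hv : ¬ v.count x ≤ m := fun hv => hu (h x (Or.inr hv) ▸ hv)
    rw [← List.count_pos_iff, ← List.count_pos_iff]
    omega

theorem IdBalanced.eq_replicate {m x : ℕ} {v : List ℕ}
    (h : IdBalanced m (List.replicate m x) v) : v = List.replicate m x := by
  have hx : ∀ y ∈ v, y = x := fun y hy => List.eq_of_mem_replicate ((h.1 y).2 hy)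
  have hcount : v.count x = m := by
    simpa using (h.2 x (Or.inl (by simp))).symm
  rw [List.eq_replicate_iff, ← hcount, List.count_eq_length.2 fun y hy => (hx y hy).symm]
  exact ⟨rfl, hx⟩

/-- A monoid satisfies only `m`-balanced identities iff `x^m` is an isoterm for it. -/
theorem balanced_iff_isoterm_pow (M : Type*) [Monoid M] (m : ℕ) :
    (∀ u v : List ℕ, SatM M u v → IdBalanced m u v) ↔
      Isoterm M (List.replicate m 0) := by
  constructor
  · exact fun h v hv => (h _ _ hv).eq_replicate
  · intro iso u v huv
    refine IdBalanced.of_count_eq fun x hx => ?_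
    rcases hx with hu | hv
    · exact (iso.eq_of_forall_pow_eq (fun a => (huv.pow_count_eq x a).symm) hu).symm
    · exact iso.eq_of_forall_pow_eq (huv.pow_count_eq x) hv
end

section
/- If every variable occurs fewer than α times in every word of the set W, then the monoid M(W) satisfies the identities x^α ≈ x^{α+1} and t_1 x t_2 x ⋯ t_α x ≈ x^α t_1 t_2 ⋯ t_α. -/
open scoped Classical

def Fac (W : Set (List ℕ)) (u : List ℕ) : Prop := u = [] ∨ ∃ w ∈ W, u <:+: w

lemma Fac.of_infix {W : Set (List ℕ)} {u v : List ℕ} (h : Fac W u) (hv : v <:+: u) :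
    Fac W v := by
  rcases h with rfl | ⟨w, hw, hu⟩
  · left; simpa using hv
  · exact Or.inr ⟨w, hw, hv.trans hu⟩

def MWord (W : Set (List ℕ)) : Type := Option {u : List ℕ // Fac W u}

noncomputable def mwMul {W : Set (List ℕ)} : MWord W → MWord W → MWord W
  | some a, some b =>
      if h : Fac W (a.1 ++ b.1) then some ⟨a.1 ++ b.1, h⟩ else none
  | _, _ => none

lemma mwMul_none_left {W : Set (List ℕ)} (b : MWord W) : mwMul none b = none := by
  cases b <;> rfl

lemma mwMul_none_right {W : Set (List ℕ)} (a : MWord W) : mwMul a none = none := by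
  cases a <;> rfl

lemma mwMul_some_some {W : Set (List ℕ)} (a b : {u : List ℕ // Fac W u}) :
    mwMul (some a) (some b) =
      if h : Fac W (a.1 ++ b.1) then some ⟨a.1 ++ b.1, h⟩ else none := rfl

noncomputable instance MWord.monoid (W : Set (List ℕ)) : Monoid (MWord W) where
  mul := mwMul
  one := some ⟨[], Or.inl rfl⟩
  one_mul a := by
    show mwMul (some ⟨[], Or.inl rfl⟩) a = a
    cases a with
    | none => rfl
    | some a => exact dif_pos a.2
  mul_one a := by
    show mwMul a (some ⟨[], Or.inl rfl⟩) = a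
    cases a with
    | none => rfl
    | some a =>
      have h : Fac W (a.1 ++ []) := by simpa using a.2
      rw [mwMul_some_some, dif_pos h]
      exact congrArg some (Subtype.ext (List.append_nil _))
  mul_assoc a b c := by
    show mwMul (mwMul a b) c = mwMul a (mwMul b c)
    cases a with
    | none => exact mwMul_none_left _
    | some a =>
      cases b with
      | none => erw [mwMul_none_right, mwMul_none_left]
      | some b =>
        cases c with
        | none => erw [mwMul_none_right, mwMul_none_right]
        | some c =>
          by_cases hab : Fac W (a.1 ++ b.1)
          · by_cases hbc : Fac W (b.1 ++ c.1)
            · rw [mwMul_some_some b c, dif_pos hbc, mwMul_some_some a b, dif_pos hab,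
                mwMul_some_some, mwMul_some_some]
              by_cases habc : Fac W (a.1 ++ b.1 ++ c.1)
              · have habc' : Fac W (a.1 ++ (b.1 ++ c.1)) := by
                  rwa [← List.append_assoc]
                rw [dif_pos habc, dif_pos habc']
                exact congrArg some (Subtype.ext (List.append_assoc _ _ _))
              · have habc' : ¬ Fac W (a.1 ++ (b.1 ++ c.1)) := by
                  rwa [← List.append_assoc]
                rw [dif_neg habc, dif_neg habc']
            · rw [mwMul_some_some b c, dif_neg hbc]; erw [mwMul_none_right]; rw [
                mwMul_some_some a b, dif_pos hab, mwMul_some_some]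
              have : ¬ Fac W (a.1 ++ b.1 ++ c.1) := fun h =>
                hbc (h.of_infix (by rw [List.append_assoc]; exact
                  (List.suffix_append a.1 (b.1 ++ c.1)).isInfix))
              rw [dif_neg this]
          · rw [mwMul_some_some a b, dif_neg hab]; erw [mwMul_none_left]
            cases hc : mwMul (some b) (some c) with
            | none => erw [mwMul_none_right]
            | some bc =>
              rw [mwMul_some_some]
              have hbc : bc.1 = b.1 ++ c.1 := by
                rw [mwMul_some_some] at hc
                by_cases h : Fac W (b.1 ++ c.1)
                · rw [dif_pos h] at hc; cases hc; rfl
                · rw [dif_neg h] at hc; cases hc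
              have : ¬ Fac W (a.1 ++ bc.1) := by
                rw [hbc]
                exact fun h => hab (h.of_infix (by
                  rw [← List.append_assoc]
                  exact (List.prefix_append (a.1 ++ b.1) c.1).isInfix))
              rw [dif_neg this]

/-!
Substitute `a` for `x`. If `a = 1`, both sides of each identity collapse to the same product of
the `tᵢ`. Otherwise each side contains `α` factors `a` and is therefore `0`: trivially if `a = 0`,
and if `a` is a nonempty word, because a nonzero value would be a factor of a word of `W` in
which some letter of `a` occurs `α` times.
-/

theorem Fac.count_lt {W : Set (List ℕ)} {α : ℕ} (hα : 1 ≤ α)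
    (h : ∀ w ∈ W, ∀ x : ℕ, w.count x < α) {u : List ℕ} (hu : Fac W u) (x : ℕ) :
    u.count x < α := by
  rcases hu with rfl | ⟨w, hw, huw⟩
  · rw [List.count_nil]; exact hα
  · exact (huw.sublist.count_le x).trans_lt (h w hw x)

namespace MWord

variable {W : Set (List ℕ)}

/-- The zero is sent to `[]`, like the identity. -/
def word : MWord W → List ℕ
  | some u => u.1
  | none => []

theorem word_ne_nil {a : MWord W} (h0 : a ≠ none) (h1 : a ≠ 1) : word a ≠ [] := by
  cases a with
  | none => exact absurd rfl h0
  | some u => exact fun h => h1 (congrArg some (Subtype.ext h))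

theorem mul_eq_some {a b : MWord W} {c : {u : List ℕ // Fac W u}} (h : a * b = some c) :
    ∃ a' b', a = some a' ∧ b = some b' ∧ c.1 = a'.1 ++ b'.1 := by
  change mwMul a b = some c at h
  cases a with
  | none => cases (mwMul_none_left _).symm.trans h
  | some a' =>
    cases b with
    | none => cases (mwMul_none_right _).symm.trans h
    | some b' =>
      rw [mwMul_some_some] at h
      split_ifs at h
      cases h
      exact ⟨a', b', rfl, rfl, rfl⟩

theorem word_of_prod_eq_some {L : List (MWord W)} {c : {u : List ℕ // Fac W u}}
    (h : L.prod = some c) : c.1 = (L.map word).flatten := by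
  induction L generalizing c with
  | nil => cases h; rfl
  | cons a L ih =>
    obtain ⟨a', d, ha, hd, hc⟩ := mul_eq_some h
    rw [List.map_cons, List.flatten_cons, hc, ← ih hd, ha]
    rfl

theorem prod_eq_none_of_none_mem {L : List (MWord W)} (h : none ∈ L) : L.prod = none := by
  induction L with
  | nil => cases h
  | cons a L ih =>
    rw [List.prod_cons]
    rcases List.mem_cons.1 h with rfl | h
    · exact mwMul_none_left _
    · rw [ih h]; exact mwMul_none_right _

/-- Were the product nonzero, its word would be a factor of `W` containing each letter of `a`
at least `α` times. -/
theorem prod_eq_none_of_replicate_sublist {α : ℕ} (hα : 1 ≤ α)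
    (h : ∀ w ∈ W, ∀ x : ℕ, w.count x < α) {a : MWord W} (ha : a ≠ 1) {L : List (MWord W)}
    (hL : (List.replicate α a).Sublist L) : L.prod = none := by
  by_cases h0 : a = none
  · subst h0
    exact prod_eq_none_of_none_mem (hL.subset (List.mem_replicate.2 ⟨by omega, rfl⟩))
  cases hp : L.prod with
  | none => rfl
  | some c =>
    obtain ⟨x, hx⟩ := List.exists_mem_of_ne_nil (word a) (word_ne_nil h0 ha)
    have hsub := hL.map word
    rw [List.map_replicate] at hsub
    have hcount : α ≤ c.1.count x := calc
      α ≤ α * (word a).count x := Nat.le_mul_of_pos_right α (List.count_pos_iff.2 hx)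
      _ = (List.replicate α (word a)).flatten.count x := by simp [List.count_flatten]
      _ ≤ (L.map word).flatten.count x := hsub.flatten.count_le x
      _ = c.1.count x := by rw [word_of_prod_eq_some hp]
    exact absurd hcount (c.2.count_lt hα h x).not_ge

theorem satM_of_le_count {α : ℕ} (hα : 1 ≤ α) (h : ∀ w ∈ W, ∀ x : ℕ, w.count x < α)
    {u v : List ℕ} (x : ℕ) (hu : α ≤ u.count x) (hv : α ≤ v.count x)
    (h1 : ∀ f : ℕ → MWord W, f x = 1 → (u.map f).prod = (v.map f).prod) :
    SatM (MWord W) u v := by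
  intro f
  by_cases hf : f x = 1
  · exact h1 f hf
  · have sublist_map {s : List ℕ} (hs : α ≤ s.count x) :
        (List.replicate α (f x)).Sublist (s.map f) := by
      simpa only [List.map_replicate] using (List.replicate_sublist_iff.2 hs).map f
    rw [prod_eq_none_of_replicate_sublist hα h hf (sublist_map hu),
      prod_eq_none_of_replicate_sublist hα h hf (sublist_map hv)]

end MWord

/-- If every variable occurs fewer than `α` times in every word of `W`, then `M(W)`
satisfies `x^α ≈ x^{α+1}` and `t₁ x t₂ x ⋯ t_α x ≈ x^α t₁ t₂ ⋯ t_α`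
(with `x` the variable `0` and `tᵢ` the variable `i`). -/
theorem MWord_satisfies_A (W : Set (List ℕ)) (α : ℕ) (hα : 1 ≤ α)
    (h : ∀ w ∈ W, ∀ x : ℕ, w.count x < α) :
    SatM (MWord W) (List.replicate α 0) (List.replicate (α + 1) 0) ∧
    SatM (MWord W) ((List.range α).flatMap (fun i => [i + 1, 0]))
      (List.replicate α 0 ++ (List.range α).map (fun i => i + 1)) := by
  refine ⟨MWord.satM_of_le_count hα h 0 (by simp) (by simp) fun f hf => ?_,
    MWord.satM_of_le_count hα h 0 ?_ (by simp [List.count_append]) fun f hf => ?_⟩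
  · simp [hf]
  · simp [List.count_flatMap, Function.comp_def]
  · simp [List.flatMap, List.prod_flatten, Function.comp_def, hf]
end
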